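/- arXiv:2110.00995 — 2 statements merged into one kernel-verified Lean document; each statement's English description precedes it below -/
import Mathlib

section
/- For every complex number z, the series Σ_{n=1}^∞ (μ(n)/n)·(e^{z/n} − 1) converges and equals Σ_{k=1}^∞ z^k/(k!·ζ(k+1)), where μ is the Möbius function and ζ is the Riemann zeta function. -/
open Complex

lemma aux_hasSum_cexp_sub_one (w : ℂ) :
    HasSum (fun k : ℕ => w ^ (k + 1) / (k + 1).factorial) (Complex.exp w - 1) := by
  have h : HasSum (fun k : ℕ => w ^ k / (k.factorial : ℂ)) (Complex.exp w) := by
    rw [Complex.exp_eq_exp_ℂ]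
    exact NormedSpace.expSeries_div_hasSum_exp w
  have := (hasSum_nat_add_iff' (f := fun k : ℕ => w ^ k / (k.factorial : ℂ)) 1).mpr h
  simpa using this

lemma aux_hasSum_rexp_sub_one (x : ℝ) :
    HasSum (fun k : ℕ => x ^ (k + 1) / (k + 1).factorial) (Real.exp x - 1) := by
  have h : HasSum (fun k : ℕ => x ^ k / (k.factorial : ℝ)) (Real.exp x) := by
    rw [Real.exp_eq_exp_ℝ]
    exact NormedSpace.expSeries_div_hasSum_exp x
  have := (hasSum_nat_add_iff' (f := fun k : ℕ => x ^ k / (k.factorial : ℝ)) 1).mpr h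
  simpa using this

lemma aux_exp_sub_one_le (x : ℝ) (hx : 0 ≤ x) : Real.exp x - 1 ≤ x * Real.exp x := by
  have h := Real.add_one_le_exp (-x)
  have he : Real.exp (-x) * Real.exp x = 1 := by
    rw [← Real.exp_add]; simp
  nlinarith [Real.exp_pos x, mul_nonneg (sub_nonneg.2 h) (Real.exp_pos x).le]

lemma aux_norm_moebius_le_one (n : ℕ) : ‖(ArithmeticFunction.moebius n : ℂ)‖ ≤ 1 := by
  rw [show ((ArithmeticFunction.moebius n : ℤ) : ℂ) = ((ArithmeticFunction.moebius n : ℤ) : ℂ)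
    from rfl, Complex.norm_intCast]
  exact_mod_cast ArithmeticFunction.abs_moebius_le_one

open ArithmeticFunction in
lemma aux_hasSum_moebius_div (k : ℕ) :
    HasSum (fun n : ℕ => (ArithmeticFunction.moebius n : ℂ) / (n : ℂ) ^ (k + 2))
      (riemannZeta ((k : ℂ) + 2))⁻¹ := by
  set s : ℂ := (k : ℂ) + 2 with hs_def
  have hs : 1 < s.re := by
    have hre : s.re = (k : ℝ) + 2 := by
      simp [hs_def]
    rw [hre]
    have : (0 : ℝ) ≤ (k : ℝ) := Nat.cast_nonneg k
    linarith
  have hsummable := ArithmeticFunction.LSeriesSummable_moebius_iff.mpr hs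
  have hval : LSeries (fun n => (moebius n : ℂ)) s = (riemannZeta s)⁻¹ := by
    have h1 := ArithmeticFunction.LSeries_zeta_mul_Lseries_moebius hs
    rw [ArithmeticFunction.LSeries_zeta_eq_riemannZeta hs] at h1
    exact eq_inv_of_mul_eq_one_left (by rw [mul_comm]; exact h1)
  have hhs : HasSum (fun n => LSeries.term (fun n => (moebius n : ℂ)) s n)
      ((riemannZeta s)⁻¹) := hval ▸ hsummable.hasSum
  refine hhs.congr_fun fun n => ?_
  rcases eq_or_ne n 0 with rfl | hn
  · simp
  · rw [LSeries.term_of_ne_zero hn]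
    congr 1
    rw [hs_def]
    rw [show (k : ℂ) + 2 = ((k + 2 : ℕ) : ℂ) by push_cast; ring, Complex.cpow_natCast]

set_option maxHeartbeats 1000000 in
theorem moebius_series_eq_power_series (z : ℂ) :
    HasSum (fun n : ℕ => (ArithmeticFunction.moebius n : ℂ) / n * (Complex.exp (z / n) - 1))
      (∑' k : ℕ, z ^ (k + 1) / ((k + 1).factorial * riemannZeta (k + 2))) := by
  classical
  set μ := ArithmeticFunction.moebius with hμ
  set f : ℕ × ℕ → ℂ := fun p =>
    (μ p.1 : ℂ) / p.1 * ((z / p.1) ^ (p.2 + 1) / (p.2 + 1).factorial) with hf_def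
  -- norms of the rows
  have hrow_norm : ∀ n : ℕ, HasSum (fun k => ‖f (n, k)‖)
      (‖(μ n : ℂ) / n‖ * (Real.exp (‖z‖ / n) - 1)) := by
    intro n
    have := (aux_hasSum_rexp_sub_one (‖z‖ / n)).mul_left ‖(μ n : ℂ) / n‖
    refine this.congr_fun fun k => ?_
    simp only [hf_def, norm_mul, norm_div, norm_pow, Complex.norm_natCast]
  have hexp_nonneg : ∀ n : ℕ, (0 : ℝ) ≤ Real.exp (‖z‖ / n) - 1 := by
    intro n
    have : (0 : ℝ) ≤ ‖z‖ / n := by positivity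
    linarith [Real.one_le_exp this]
  -- summability of the norms
  have hnorm_sum : Summable fun p : ℕ × ℕ => ‖f p‖ := by
    rw [summable_prod_of_nonneg (fun p => norm_nonneg _)]
    refine ⟨fun n => (hrow_norm n).summable, ?_⟩
    have hbound : Summable fun n : ℕ => (‖z‖ * Real.exp ‖z‖) * (1 / (n : ℝ) ^ 2) :=
      (Real.summable_one_div_nat_pow.mpr (by norm_num)).mul_left _
    have hle : ∀ n : ℕ, ‖(μ n : ℂ) / n‖ * (Real.exp (‖z‖ / n) - 1)
        ≤ (‖z‖ * Real.exp ‖z‖) * (1 / (n : ℝ) ^ 2) := by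
      intro n
      rcases Nat.eq_zero_or_pos n with rfl | hn
      · simp [hμ]
      · have hn1 : (1 : ℝ) ≤ (n : ℝ) := by exact_mod_cast hn
        have hn0 : (0 : ℝ) < (n : ℝ) := by linarith
        have hx0 : (0 : ℝ) ≤ ‖z‖ / n := by positivity
        have hxz : ‖z‖ / n ≤ ‖z‖ := by
          rw [div_le_iff₀ hn0]
          nlinarith [norm_nonneg z]
        have h1 : Real.exp (‖z‖ / n) - 1 ≤ (‖z‖ / n) * Real.exp ‖z‖ :=
          (aux_exp_sub_one_le _ hx0).trans
            (mul_le_mul_of_nonneg_left (Real.exp_le_exp.mpr hxz) hx0)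
        have h2 : ‖(μ n : ℂ) / n‖ ≤ 1 / n := by
          rw [norm_div, Complex.norm_natCast]
          gcongr
          exact aux_norm_moebius_le_one n
        calc ‖(μ n : ℂ) / n‖ * (Real.exp (‖z‖ / n) - 1)
            ≤ (1 / (n : ℝ)) * ((‖z‖ / n) * Real.exp ‖z‖) :=
              mul_le_mul h2 h1 (hexp_nonneg n) (by positivity)
          _ = (‖z‖ * Real.exp ‖z‖) * (1 / (n : ℝ) ^ 2) := by
              ring
    refine Summable.congr (hbound.of_nonneg_of_le
      (fun n => mul_nonneg (norm_nonneg _) (hexp_nonneg n)) hle) fun n => ?_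
    exact ((hrow_norm n).tsum_eq).symm
  have hf_sum : Summable f := hnorm_sum.of_norm
  -- rows: sum over k for fixed n
  have hrow : ∀ n : ℕ, HasSum (fun k => f (n, k))
      ((μ n : ℂ) / n * (Complex.exp (z / n) - 1)) := fun n =>
    (aux_hasSum_cexp_sub_one (z / n)).mul_left _
  have h1 : HasSum (fun n : ℕ => (μ n : ℂ) / n * (Complex.exp (z / n) - 1)) (∑' p, f p) :=
    hf_sum.hasSum.prod_fiberwise hrow
  -- columns: sum over n for fixed k
  have hswap : HasSum (fun p : ℕ × ℕ => f (p.2, p.1)) (∑' p, f p) := by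
    have := (Equiv.prodComm ℕ ℕ).hasSum_iff.mpr hf_sum.hasSum
    exact this.congr_fun fun p => rfl
  have hcol : ∀ k : ℕ, HasSum (fun n : ℕ => f (n, k))
      (z ^ (k + 1) / ((k + 1).factorial * riemannZeta ((k : ℂ) + 2))) := by
    intro k
    have := (aux_hasSum_moebius_div k).mul_left (z ^ (k + 1) / ((k + 1).factorial : ℂ))
    have heq : z ^ (k + 1) / ((k + 1).factorial : ℂ) * (riemannZeta ((k : ℂ) + 2))⁻¹
        = z ^ (k + 1) / ((k + 1).factorial * riemannZeta ((k : ℂ) + 2)) := by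
      rw [← div_div]
      exact (div_eq_mul_inv _ _).symm
    rw [heq] at this
    refine this.congr_fun fun n => ?_
    rcases eq_or_ne n 0 with rfl | hn
    · simp [hμ, hf_def]
    · have hn0 : (n : ℂ) ≠ 0 := Nat.cast_ne_zero.mpr hn
      have hfac : ((k + 1).factorial : ℂ) ≠ 0 := Nat.cast_ne_zero.mpr (k + 1).factorial_ne_zero
      simp only [hf_def, div_pow]
      field_simp
      ring
  have h2 : HasSum (fun k : ℕ => z ^ (k + 1) / ((k + 1).factorial * riemannZeta ((k : ℂ) + 2)))
      (∑' p, f p) := hswap.prod_fiberwise hcol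
  rw [show (∑' k : ℕ, z ^ (k + 1) / ((k + 1).factorial * riemannZeta (k + 2)))
    = ∑' p, f p from h2.tsum_eq]
  exact h1
end

section
/- For every real x > 0 one has (1/2π)·∫_{−∞}^{∞} Γ(−1/2 + it)·x^{1/2 − it} dt = e^{−x} − 1; that is, the inverse Mellin integral (1/2πi)·∫_{−1/2−i∞}^{−1/2+i∞} Γ(s)·x^{−s} ds along the vertical line Re s = −1/2 converges absolutely and equals e^{−x} − 1. -/
open Complex MeasureTheory

namespace InverseMellinAux

open Real Set Filter

/-- `|Γ(s)| ≤ Γ(Re s)` for `Re s > 0`. -/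
lemma norm_Gamma_le (s : ℂ) (hs : 0 < s.re) : ‖Complex.Gamma s‖ ≤ Real.Gamma s.re := by
  rw [Complex.Gamma_eq_integral hs, Complex.GammaIntegral, Real.Gamma_eq_integral hs]
  refine (norm_integral_le_integral_norm _).trans_eq ?_
  refine setIntegral_congr_fun measurableSet_Ioi fun t ht => ?_
  rw [norm_mul, Complex.norm_real, Real.norm_of_nonneg (Real.exp_pos _).le,
    Complex.norm_cpow_eq_rpow_re_of_pos ht]
  simp

lemma exp_neg_le_one {t : ℝ} (ht : 0 ≤ t) : Real.exp (-t) ≤ 1 := by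
  have := Real.exp_le_exp.mpr (neg_nonpos.mpr ht)
  simpa using this

lemma exp_sub_one_abs_le_one {t : ℝ} (ht : 0 ≤ t) : |Real.exp (-t) - 1| ≤ 1 := by
  rw [abs_sub_comm, _root_.abs_of_nonneg (by linarith [exp_neg_le_one ht])]
  linarith [Real.exp_pos (-t)]

lemma exp_sub_one_abs_le {t : ℝ} (ht : 0 ≤ t) : |Real.exp (-t) - 1| ≤ t := by
  rw [abs_sub_comm, _root_.abs_of_nonneg (by linarith [exp_neg_le_one ht])]
  linarith [Real.add_one_le_exp (-t)]

lemma mellin_conv (s : ℂ) (hs1 : -1 < s.re) (hs0 : s.re < 0) :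
    MellinConvergent (fun t : ℝ => ((Real.exp (-t) - 1 : ℝ) : ℂ)) s := by
  refine mellinConvergent_of_isBigO_rpow (a := 0) (b := -1) ?_ ?_ hs0 ?_ hs1
  · exact (Continuous.continuousOn (by continuity)).locallyIntegrableOn measurableSet_Ioi
  · refine Asymptotics.IsBigO.of_bound 1 ?_
    filter_upwards [eventually_ge_atTop (0 : ℝ)] with t ht
    rw [Complex.norm_real, Real.norm_eq_abs, Real.norm_eq_abs, neg_zero, Real.rpow_zero,
      abs_one, mul_one]
    exact exp_sub_one_abs_le_one ht
  · refine Asymptotics.IsBigO.of_bound 1 ?_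
    filter_upwards [self_mem_nhdsWithin] with t (ht : (0 : ℝ) < t)
    rw [Complex.norm_real, Real.norm_eq_abs, one_mul, Real.norm_eq_abs, neg_neg,
      Real.rpow_one, abs_of_pos ht]
    exact exp_sub_one_abs_le ht.le

/-- Mellin transform of `e^{-t} - 1` is `Γ(s)` for `-1 < Re s < 0`. -/
lemma mellin_exp_sub_one (s : ℂ) (hs1 : -1 < s.re) (hs0 : s.re < 0) :
    mellin (fun t : ℝ => ((Real.exp (-t) - 1 : ℝ) : ℂ)) s = Complex.Gamma s := by
  have hsne : s ≠ 0 := fun h => by simp [h] at hs0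
  set u := fun t : ℝ => ((Real.exp (-t) - 1 : ℝ) : ℂ) with hu_def
  set u' := fun t : ℝ => ((-Real.exp (-t) : ℝ) : ℂ) with hu'_def
  set v := fun t : ℝ => (t : ℂ) ^ s / s with hv_def
  set v' := fun t : ℝ => (t : ℂ) ^ (s - 1) with hv'_def
  have hnormv : ∀ t : ℝ, 0 < t → ‖v t‖ = t ^ s.re * ‖s‖⁻¹ := by
    intro t ht
    rw [hv_def, norm_div,
      Complex.norm_cpow_eq_rpow_re_of_pos ht, div_eq_mul_inv]
  have hu : ∀ t ∈ Ioi (0 : ℝ), HasDerivAt u (u' t) t := by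
    intro t _
    have h1 : HasDerivAt (fun t : ℝ => Real.exp (-t) - 1) (-Real.exp (-t)) t := by
      simpa using (((Real.hasDerivAt_exp (-t)).comp t (hasDerivAt_neg t)).sub_const 1)
    exact h1.ofReal_comp
  have hv : ∀ t ∈ Ioi (0 : ℝ), HasDerivAt v (v' t) t := by
    intro t ht
    have h1 := hasDerivAt_ofReal_cpow_const' (ne_of_gt (mem_Ioi.mp ht)) (r := s - 1)
      (by simpa [sub_eq_iff_eq_add] using hsne)
    simpa [hv_def, hv'_def] using h1
  have huv' : IntegrableOn (u * v') (Ioi (0 : ℝ)) := by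
    have := mellin_conv s hs1 hs0
    rw [MellinConvergent] at this
    refine this.congr_fun (fun t ht => ?_) measurableSet_Ioi
    show _ = u t * v' t
    beta_reduce
    rw [smul_eq_mul, mul_comm]
  have hexp : IntegrableOn (fun t : ℝ => Real.exp (-t) * t ^ s.re) (Ioi (0 : ℝ)) := by
    have := Real.GammaIntegral_convergent (s := s.re + 1) (by linarith)
    simpa using this
  have hu'v : IntegrableOn (u' * v) (Ioi (0 : ℝ)) := by
    refine Integrable.mono' (hexp.mul_const ‖s‖⁻¹) ?_ ?_
    · apply ContinuousOn.aestronglyMeasurable ?_ measurableSet_Ioi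
      apply ContinuousOn.mul
      · exact Continuous.continuousOn (by continuity)
      · intro t ht
        exact ((Complex.continuousAt_ofReal_cpow_const t s
          (Or.inr (ne_of_gt (mem_Ioi.mp ht)))).div_const s).continuousWithinAt
    · filter_upwards [ae_restrict_mem measurableSet_Ioi] with t ht
      rw [Pi.mul_apply, norm_mul, hnormv t (mem_Ioi.mp ht), hu'_def]
      rw [Complex.norm_real, Real.norm_eq_abs, abs_neg, abs_of_pos (Real.exp_pos _),
        ← mul_assoc]
  have h_zero : Tendsto (u * v) (nhdsWithin 0 (Ioi (0:ℝ))) (nhds 0) := by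
    apply squeeze_zero_norm' (a := fun t : ℝ => t ^ (1 + s.re) * ‖s‖⁻¹)
    · filter_upwards [self_mem_nhdsWithin] with t (ht : (0:ℝ) < t)
      rw [Pi.mul_apply, norm_mul, hnormv t ht]
      have h1 : ‖u t‖ ≤ t := by
        rw [hu_def, Complex.norm_real, Real.norm_eq_abs]
        exact exp_sub_one_abs_le ht.le
      have h2 : (0:ℝ) ≤ t ^ s.re * ‖s‖⁻¹ := by positivity
      calc ‖u t‖ * (t ^ s.re * ‖s‖⁻¹) ≤ t * (t ^ s.re * ‖s‖⁻¹) :=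
            mul_le_mul_of_nonneg_right h1 h2
        _ = t ^ (1 + s.re) * ‖s‖⁻¹ := by rw [Real.rpow_add ht, Real.rpow_one]; ring
    · have h1 : Tendsto (fun t : ℝ => t ^ (1 + s.re)) (nhdsWithin 0 (Ioi (0:ℝ))) (nhds 0) := by
        have := (Real.continuousAt_rpow_const 0 (1 + s.re) (Or.inr (by linarith))).tendsto
        rw [Real.zero_rpow (by linarith : 1 + s.re ≠ 0)] at this
        exact this.mono_left nhdsWithin_le_nhds
      simpa using h1.mul_const ‖s‖⁻¹
  have h_infty : Tendsto (u * v) atTop (nhds 0) := by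
    apply squeeze_zero_norm' (a := fun t : ℝ => t ^ s.re * ‖s‖⁻¹)
    · filter_upwards [eventually_gt_atTop (0:ℝ)] with t ht
      rw [Pi.mul_apply, norm_mul, hnormv t ht]
      have h1 : ‖u t‖ ≤ 1 := by
        rw [hu_def, Complex.norm_real, Real.norm_eq_abs]
        exact exp_sub_one_abs_le_one ht.le
      have h2 : (0:ℝ) ≤ t ^ s.re * ‖s‖⁻¹ := by positivity
      simpa using mul_le_mul_of_nonneg_right h1 h2
    · have h1 : Tendsto (fun t : ℝ => t ^ s.re) atTop (nhds 0) := by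
        simpa using tendsto_rpow_neg_atTop (by linarith : 0 < -s.re)
      simpa using h1.mul_const ‖s‖⁻¹
  have key := integral_Ioi_mul_deriv_eq_deriv_mul hu hv huv' hu'v h_zero h_infty
  have hint : ∫ t in Ioi (0:ℝ), u' t * v t = -Complex.Gamma s := by
    have heq : ∀ t ∈ Ioi (0:ℝ), u' t * v t
        = (-s⁻¹) * (((Real.exp (-t) : ℝ) : ℂ) * (t : ℂ) ^ ((s + 1) - 1)) := by
      intro t _
      rw [hu'_def, hv_def]
      push_cast
      rw [add_sub_cancel_right]
      field_simp
    rw [setIntegral_congr_fun measurableSet_Ioi heq, MeasureTheory.integral_const_mul]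
    have : ∫ t in Ioi (0:ℝ), ((Real.exp (-t) : ℝ) : ℂ) * (t : ℂ) ^ ((s + 1) - 1)
        = Complex.Gamma (s + 1) := by
      rw [Complex.Gamma_eq_integral (by rw [Complex.add_re, Complex.one_re]; linarith), Complex.GammaIntegral]
    rw [this, Complex.Gamma_add_one s hsne]
    field_simp
  have hmel : mellin (fun t : ℝ => ((Real.exp (-t) - 1 : ℝ) : ℂ)) s
      = ∫ t in Ioi (0:ℝ), u t * v' t := by
    rw [mellin]
    refine setIntegral_congr_fun measurableSet_Ioi fun t _ => ?_
    show _ = u t * v' t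
    rw [smul_eq_mul, mul_comm]
  rw [hmel, key, hint]
  ring

lemma Gamma_line_ne (t : ℝ) : ∀ m : ℕ, (-(1/2 : ℂ) + I * t) ≠ -m := by
  intro m h
  have hre := congrArg Complex.re h
  simp at hre
  rcases Nat.eq_zero_or_pos m with h0 | h1
  · rw [h0] at hre; norm_num at hre
  · have : (1:ℝ) ≤ (m:ℝ) := by exact_mod_cast h1
    linarith

lemma cont_Gamma_line : Continuous fun t : ℝ => Complex.Gamma (-(1/2 : ℂ) + I * t) := by
  refine continuous_iff_continuousAt.mpr fun t => ?_
  refine ContinuousAt.comp ?_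
    (continuous_const.add (continuous_const.mul Complex.continuous_ofReal)).continuousAt
  exact (Complex.differentiableAt_Gamma _ (Gamma_line_ne t)).continuousAt

lemma integrable_Gamma_line :
    Integrable (fun t : ℝ => Complex.Gamma (-(1/2 : ℂ) + I * t)) := by
  refine Integrable.mono' ((integrable_inv_one_add_sq.const_mul
    (4 * Real.Gamma (3/2)))) cont_Gamma_line.aestronglyMeasurable ?_
  refine Filter.Eventually.of_forall fun t => ?_
  set s : ℂ := -(1/2 : ℂ) + I * t with hs_def
  have hre : s.re = -(1/2) := by simp [hs_def]
  have him : s.im = t := by simp [hs_def]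
  have hs0 : s ≠ 0 := fun h => by rw [h] at hre; norm_num at hre
  have hs1 : s + 1 ≠ 0 := fun h => by
    have := congrArg Complex.re h
    rw [Complex.add_re, hre, Complex.one_re, Complex.zero_re] at this
    norm_num at this
  have hfact : Complex.Gamma (s + 2) = (s + 1) * s * Complex.Gamma s := by
    have h1 : s + 2 = (s + 1) + 1 := by ring
    rw [h1, Complex.Gamma_add_one _ hs1, Complex.Gamma_add_one _ hs0]
    ring
  have hnorm2 : ‖s‖ * ‖s + 1‖ = 1/4 + t^2 := by
    have h1 : ‖s‖ = Real.sqrt (1/4 + t^2) := by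
      rw [Complex.norm_def, Complex.normSq_apply, hre, him]
      congr 1; ring
    have h2 : ‖s + 1‖ = Real.sqrt (1/4 + t^2) := by
      rw [Complex.norm_def, Complex.normSq_apply, Complex.add_re, Complex.add_im, hre, him,
        Complex.one_re, Complex.one_im]
      congr 1; ring
    rw [h1, h2, Real.mul_self_sqrt (by positivity)]
  have hg : (0:ℝ) < Real.Gamma (3/2) := Real.Gamma_pos_of_pos (by norm_num)
  have h14 : (0:ℝ) < 1/4 + t^2 := by positivity
  have h1t : (0:ℝ) < 1 + t^2 := by positivity
  have hb : ‖Complex.Gamma s‖ * (1/4 + t^2) ≤ Real.Gamma (3/2) := by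
    have hle := norm_Gamma_le (s + 2) (by rw [Complex.add_re, hre]; norm_num)
    have hre2 : (s + 2).re = 3/2 := by rw [Complex.add_re, hre]; norm_num
    rw [hre2, hfact, norm_mul, norm_mul] at hle
    calc ‖Complex.Gamma s‖ * (1/4 + t^2)
        = ‖s+1‖ * ‖s‖ * ‖Complex.Gamma s‖ := by
          rw [← hnorm2]; ring
      _ ≤ Real.Gamma (3/2) := hle
  have hfin : ‖Complex.Gamma s‖ ≤ Real.Gamma (3/2) / (1/4 + t^2) :=
    (le_div_iff₀ h14).mpr hb
  refine hfin.trans ?_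
  rw [← div_eq_mul_inv, div_le_div_iff₀ h14 h1t]
  nlinarith [sq_nonneg t, hg.le]

theorem main (x : ℝ) (hx : 0 < x) :
    Integrable (fun t : ℝ =>
        Complex.Gamma (-(1 / 2) + I * t) * (x : ℂ) ^ ((1 / 2 : ℂ) - I * t)) ∧
      (1 / (2 * Real.pi)) *
          ∫ t : ℝ, Complex.Gamma (-(1 / 2) + I * t) * (x : ℂ) ^ ((1 / 2 : ℂ) - I * t) =
        ((Real.exp (-x) - 1 : ℝ) : ℂ) := by
  have hxC : (x : ℂ) ≠ 0 := Complex.ofReal_ne_zero.mpr hx.ne'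
  set F : ℝ → ℂ := fun t : ℝ => ((Real.exp (-t) - 1 : ℝ) : ℂ) with hF_def
  have hre : ∀ y : ℝ, (((-1/2 : ℝ) : ℂ) + y * I).re = -1/2 := by
    intro y; simp
  have hline : ∀ y : ℝ, mellin F (((-1/2 : ℝ) : ℂ) + y * I)
      = Complex.Gamma (-(1/2 : ℂ) + I * y) := by
    intro y
    rw [mellin_exp_sub_one _ (by rw [hre]; norm_num) (by rw [hre]; norm_num)]
    congr 1
    push_cast
    ring
  have hMC : MellinConvergent F ((-1/2 : ℝ) : ℂ) :=
    mellin_conv _ (by norm_num) (by norm_num)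
  have hvert : Complex.VerticalIntegrable (mellin F) (-1/2) := by
    refine integrable_Gamma_line.congr (Filter.Eventually.of_forall fun y => ?_)
    exact (hline y).symm
  have hcont : ContinuousAt F x := (by continuity : Continuous F).continuousAt
  have hinv := mellinInv_mellin_eq (-1/2) F hx hMC hvert hcont
  have hnormcpow : ∀ t : ℝ, ‖(x : ℂ) ^ ((1/2 : ℂ) - I * t)‖ = x ^ (1/2 : ℝ) := by
    intro t
    rw [Complex.norm_cpow_eq_rpow_re_of_pos hx]
    congr 1
    simp
  constructor
  · refine Integrable.mono' (integrable_Gamma_line.norm.mul_const (x ^ (1/2 : ℝ)))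
      ?_ (Filter.Eventually.of_forall fun t => ?_)
    · exact (cont_Gamma_line.mul ((by continuity : Continuous fun t : ℝ =>
        (1/2 : ℂ) - I * t).const_cpow (Or.inl hxC))).aestronglyMeasurable
    · rw [norm_mul, hnormcpow t]
  · rw [mellinInv] at hinv
    have hIeq : ∫ t : ℝ, Complex.Gamma (-(1 / 2) + I * t) * (x : ℂ) ^ ((1 / 2 : ℂ) - I * t)
        = ∫ y : ℝ, (x : ℂ) ^ (-(((-1/2 : ℝ) : ℂ) + y * I)) •
            mellin F (((-1/2 : ℝ) : ℂ) + y * I) := by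
      refine integral_congr_ae (Filter.Eventually.of_forall fun y => ?_)
      beta_reduce
      rw [hline y, smul_eq_mul, mul_comm]
      congr 2
      push_cast
      ring
    rw [hIeq]
    have h2 : ((1 / (2 * Real.pi) : ℝ) : ℂ) = 1 / (2 * (Real.pi : ℂ)) := by push_cast; ring
    rw [← h2, ← Complex.real_smul]
    exact hinv

end InverseMellinAux

open InverseMellinAux in
theorem inverse_mellin_gamma (x : ℝ) (hx : 0 < x) :
    Integrable (fun t : ℝ =>
        Complex.Gamma (-(1 / 2) + I * t) * (x : ℂ) ^ ((1 / 2 : ℂ) - I * t)) ∧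
      (1 / (2 * Real.pi)) *
          ∫ t : ℝ, Complex.Gamma (-(1 / 2) + I * t) * (x : ℂ) ^ ((1 / 2 : ℂ) - I * t) =
        ((Real.exp (-x) - 1 : ℝ) : ℂ) := by
  exact InverseMellinAux.main x hx
end
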